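/- arXiv:1601.03981 — 3 statements merged into one kernel-verified Lean document; each statement's English description precedes it below -/
import Mathlib

section
/- If E ⊆ 𝔽_q² and 𝓛 is a collection of lines in 𝔽_q² with |E|·|𝓛| > q³, then there exists a point of E incident to a line of 𝓛. -/
/-! Any two distinct points of `𝔽_q²` lie on exactly one line, every line has `q` points, hence
every point lies on `q + 1` lines and there are `q (q + 1)` lines. Double counting gives the first
two moments of `x_ℓ = |E ∩ ℓ|` over all lines, `∑ x_ℓ = |E| (q + 1)` and
`∑ x_ℓ² = |E| (q + |E|)`, so `∑_ℓ (q x_ℓ - |E|)² = q³ |E| - q |E|²`. A line missing `E`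
contributes `|E|²` to this sum; if every line of `𝓛` misses `E`, then `|𝓛| |E|² ≤ q³ |E| - q |E|²`,
so `|E| |𝓛| ≤ q³`. -/

open Finset
open scoped Classical

/-- An affine line in `F × F`, given as the finset of solutions of `a*x + b*y = c`
with `(a,b) ≠ (0,0)`. -/
def IsLine {F : Type*} [Field F] [Fintype F] [DecidableEq F] (ℓ : Finset (F × F)) : Prop :=
  ∃ a b c : F, (a, b) ≠ (0, 0) ∧
    ℓ = Finset.univ.filter (fun p : F × F => a * p.1 + b * p.2 = c)

namespace Finset

variable {α : Type*} [DecidableEq α]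

theorem sum_card_offDiag_inter {B : Finset (Finset α)} (s : Finset α)
    (h : ∀ a ∈ s, ∀ b ∈ s, a ≠ b → #{t ∈ B | a ∈ t ∧ b ∈ t} = 1) :
    ∑ t ∈ B, #(s ∩ t).offDiag = #s.offDiag := by
  let r : α × α → Finset α → Prop := fun x t => x.1 ∈ t ∧ x.2 ∈ t
  calc ∑ t ∈ B, #(s ∩ t).offDiag = ∑ t ∈ B, #(s.offDiag.bipartiteBelow r t) := by
        refine sum_congr rfl fun t _ => congrArg card ?_
        ext x
        simp only [mem_offDiag, mem_inter, mem_bipartiteBelow, r]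
        tauto
    _ = ∑ x ∈ s.offDiag, #(B.bipartiteAbove r x) :=
        (sum_card_bipartiteAbove_eq_sum_card_bipartiteBelow r).symm
    _ = ∑ x ∈ s.offDiag, 1 := by
        refine sum_congr rfl fun x hx => ?_
        obtain ⟨h₁, h₂, hne⟩ := mem_offDiag.1 hx
        exact h x.1 h₁ x.2 h₂ hne
    _ = #s.offDiag := by rw [card_eq_sum_ones]

end Finset

theorem mul_add_mul_eq_zero_iff_of_orthogonal {F : Type*} [Field F] {a b u₁ u₂ v₁ v₂ : F}
    (hab : (a, b) ≠ (0, 0)) (hu : (u₁, u₂) ≠ (0, 0)) (h : a * u₁ + b * u₂ = 0) :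
    a * v₁ + b * v₂ = 0 ↔ v₁ * u₂ = v₂ * u₁ := by
  constructor
  · intro hv
    have ha : a * (v₁ * u₂ - v₂ * u₁) = 0 := by linear_combination u₂ * hv - v₂ * h
    have hb : b * (v₁ * u₂ - v₂ * u₁) = 0 := by linear_combination v₁ * h - u₁ * hv
    by_contra hD
    replace hD := sub_ne_zero.2 hD
    exact hab (by simp [(mul_eq_zero.1 ha).resolve_right hD, (mul_eq_zero.1 hb).resolve_right hD])
  · intro hD
    have h₁ : (a * v₁ + b * v₂) * u₁ = 0 := by linear_combination v₁ * h - b * hD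
    have h₂ : (a * v₁ + b * v₂) * u₂ = 0 := by linear_combination v₂ * h + a * hD
    by_contra hv
    exact hu (by simp [(mul_eq_zero.1 h₁).resolve_left hv, (mul_eq_zero.1 h₂).resolve_left hv])

section AffinePlane

variable {F : Type*} [Field F] [Fintype F] [DecidableEq F]

variable (F) in
noncomputable def lines : Finset (Finset (F × F)) := {ℓ | IsLine ℓ}

theorem mem_lines {ℓ : Finset (F × F)} : ℓ ∈ lines F ↔ IsLine ℓ := by
  simp [lines]

theorem IsLine.mem_iff {ℓ : Finset (F × F)} (hℓ : IsLine ℓ) {p p' : F × F} (hp : p ∈ ℓ)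
    (hp' : p' ∈ ℓ) (hne : p ≠ p') (x : F × F) :
    x ∈ ℓ ↔ (x.1 - p.1) * (p'.2 - p.2) = (x.2 - p.2) * (p'.1 - p.1) := by
  obtain ⟨a, b, c, hab, rfl⟩ := hℓ
  simp only [mem_filter, mem_univ, true_and] at hp hp' ⊢
  have hu : (p'.1 - p.1, p'.2 - p.2) ≠ (0, 0) := by
    intro h
    simp only [Prod.mk.injEq, sub_eq_zero] at h
    exact hne (Prod.ext h.1 h.2).symm
  rw [← mul_add_mul_eq_zero_iff_of_orthogonal hab hu (by linear_combination hp' - hp)]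
  constructor
  · intro h; linear_combination h - hp
  · intro h; linear_combination h + hp

theorem IsLine.eq_of_mem_of_mem {ℓ ℓ' : Finset (F × F)} (hℓ : IsLine ℓ) (hℓ' : IsLine ℓ')
    {p p' : F × F} (hne : p ≠ p') (hp : p ∈ ℓ) (hp' : p' ∈ ℓ) (hpℓ' : p ∈ ℓ') (hp'ℓ' : p' ∈ ℓ') :
    ℓ = ℓ' := by
  ext x
  rw [hℓ.mem_iff hp hp' hne, hℓ'.mem_iff hpℓ' hp'ℓ' hne]

theorem exists_isLine_mem_mem {p p' : F × F} (hne : p ≠ p') :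
    ∃ ℓ, IsLine ℓ ∧ p ∈ ℓ ∧ p' ∈ ℓ := by
  refine ⟨univ.filter fun x : F × F =>
      (p'.2 - p.2) * x.1 + (p.1 - p'.1) * x.2 = (p'.2 - p.2) * p.1 + (p.1 - p'.1) * p.2,
    ⟨_, _, _, ?_, rfl⟩, by simp, by simp; ring⟩
  intro h
  simp only [Prod.mk.injEq, sub_eq_zero] at h
  exact hne (Prod.ext h.2 h.1.symm)

theorem card_lines_mem_mem {p p' : F × F} (hne : p ≠ p') :
    #{ℓ ∈ lines F | p ∈ ℓ ∧ p' ∈ ℓ} = 1 := by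
  obtain ⟨ℓ, hℓ, hp, hp'⟩ := exists_isLine_mem_mem hne
  rw [card_eq_one]
  refine ⟨ℓ, eq_singleton_iff_unique_mem.2 ⟨by simp [mem_lines, hℓ, hp, hp'], ?_⟩⟩
  simp only [mem_filter, mem_lines]
  rintro ℓ' ⟨hℓ', hpℓ', hp'ℓ'⟩
  exact hℓ'.eq_of_mem_of_mem hℓ hne hpℓ' hp'ℓ' hp hp'

theorem card_filter_mul_add_mul_eq {a : F} (ha : a ≠ 0) (b c : F) :
    #{p : F × F | a * p.1 + b * p.2 = c} = Fintype.card F := by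
  rw [← card_univ]
  refine card_nbij' Prod.snd (fun y => ((c - b * y) / a, y)) (by simp [Set.MapsTo]) ?_ ?_ ?_
  · intro y _
    simp only [coe_filter, mem_univ, true_and, Set.mem_ofPred_eq]
    field_simp
    ring
  · rintro ⟨x, y⟩ hxy
    simp only [coe_filter, mem_univ, true_and, Set.mem_ofPred_eq] at hxy
    simp only [Prod.mk.injEq, and_true]
    field_simp
    linear_combination -hxy
  · intro y _
    rfl

theorem IsLine.card_eq {ℓ : Finset (F × F)} (hℓ : IsLine ℓ) : #ℓ = Fintype.card F := by
  obtain ⟨a, b, c, hab, rfl⟩ := hℓ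
  rcases ne_or_eq a 0 with ha | rfl
  · exact card_filter_mul_add_mul_eq ha b c
  have hb : b ≠ 0 := by rintro rfl; exact hab rfl
  rw [← card_filter_mul_add_mul_eq hb 0 c]
  refine card_nbij' Prod.swap Prod.swap ?_ ?_ (fun _ _ => rfl) (fun _ _ => rfl) <;>
    simp [Set.MapsTo]

/-- Each of the `q² - 1` points other than `p` lies on exactly one line through `p`, and each line
through `p` carries `q - 1` of them. -/
theorem card_lines_mem (p : F × F) : #{ℓ ∈ lines F | p ∈ ℓ} = Fintype.card F + 1 := by
  have hcount : ∑ ℓ ∈ {ℓ ∈ lines F | p ∈ ℓ}, #(univ.erase p ∩ ℓ) = #(univ.erase p) * 1 :=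
    sum_card_inter fun p' hp' => by
      rw [filter_filter]
      exact card_lines_mem_mem (ne_of_mem_erase hp').symm
  have hline : ∀ ℓ ∈ {ℓ ∈ lines F | p ∈ ℓ}, #(univ.erase p ∩ ℓ) = Fintype.card F - 1 := by
    intro ℓ hℓ
    obtain ⟨hℓ, hp⟩ := mem_filter.1 hℓ
    rw [erase_inter, univ_inter, card_erase_of_mem hp, (mem_lines.1 hℓ).card_eq]
  rw [sum_congr rfl hline, sum_const, smul_eq_mul, card_erase_of_mem (mem_univ p), card_univ,
    Fintype.card_prod, mul_one] at hcount
  refine Nat.eq_of_mul_eq_mul_right (Nat.sub_pos_of_lt (Fintype.one_lt_card (α := F))) ?_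
  rw [hcount, mul_self_tsub_one]

theorem card_lines : #(lines F) = Fintype.card F * (Fintype.card F + 1) := by
  have h := sum_card (B := lines F) fun p => card_lines_mem p
  rw [sum_congr rfl fun ℓ hℓ => (mem_lines.1 hℓ).card_eq, sum_const, smul_eq_mul,
    Fintype.card_prod] at h
  exact Nat.eq_of_mul_eq_mul_right Fintype.card_pos (by rw [h]; ring)

theorem sum_card_inter_lines (E : Finset (F × F)) :
    ∑ ℓ ∈ lines F, #(E ∩ ℓ) = #E * (Fintype.card F + 1) :=
  sum_card_inter fun p _ => card_lines_mem p

theorem sum_sq_card_inter_lines (E : Finset (F × F)) :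
    ∑ ℓ ∈ lines F, #(E ∩ ℓ) ^ 2 = #E * (Fintype.card F + #E) := by
  have hsq : ∀ s : Finset (F × F), #s ^ 2 = #s.offDiag + #s := fun s => by
    rw [offDiag_card, Nat.sub_add_cancel (Nat.le_mul_self _), sq]
  simp only [hsq, sum_add_distrib, sum_card_inter_lines,
    sum_card_offDiag_inter E fun p _ p' _ hne => card_lines_mem_mem hne]
  linarith [hsq E]

theorem sum_sq_mul_card_inter_sub_card (E : Finset (F × F)) :
    ∑ ℓ ∈ lines F, ((Fintype.card F : ℤ) * #(E ∩ ℓ) - #E) ^ 2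
      = (Fintype.card F : ℤ) ^ 3 * #E - Fintype.card F * #E ^ 2 := by
  have h₁ : ∑ ℓ ∈ lines F, (#(E ∩ ℓ) : ℤ) = #E * (Fintype.card F + 1) := by
    exact_mod_cast sum_card_inter_lines E
  have h₂ : ∑ ℓ ∈ lines F, (#(E ∩ ℓ) : ℤ) ^ 2 = #E * (Fintype.card F + #E) := by
    exact_mod_cast sum_sq_card_inter_lines E
  have h₀ : (#(lines F) : ℤ) = Fintype.card F * (Fintype.card F + 1) := by
    exact_mod_cast card_lines
  have hexpand : ∀ ℓ ∈ lines F, ((Fintype.card F : ℤ) * #(E ∩ ℓ) - #E) ^ 2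
      = (Fintype.card F : ℤ) ^ 2 * #(E ∩ ℓ) ^ 2 - 2 * Fintype.card F * #E * #(E ∩ ℓ)
        + #E ^ 2 :=
    fun _ _ => by ring
  rw [sum_congr rfl hexpand, sum_add_distrib, sum_sub_distrib, ← mul_sum, ← mul_sum, h₁, h₂,
    sum_const, nsmul_eq_mul, h₀]
  ring

theorem card_mul_card_le_of_disjoint {E : Finset (F × F)} {𝓛 : Finset (Finset (F × F))}
    (h𝓛 : 𝓛 ⊆ lines F) (hE : ∀ ℓ ∈ 𝓛, Disjoint E ℓ) : #E * #𝓛 ≤ Fintype.card F ^ 3 := by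
  have hvar : (#𝓛 : ℤ) * #E ^ 2 ≤ (Fintype.card F : ℤ) ^ 3 * #E - Fintype.card F * #E ^ 2 :=
    calc (#𝓛 : ℤ) * #E ^ 2 = ∑ ℓ ∈ 𝓛, ((Fintype.card F : ℤ) * #(E ∩ ℓ) - #E) ^ 2 := by
          rw [sum_congr rfl fun ℓ hℓ => by rw [disjoint_iff_inter_eq_empty.1 (hE ℓ hℓ)],
            sum_const, nsmul_eq_mul]
          simp
      _ ≤ ∑ ℓ ∈ lines F, ((Fintype.card F : ℤ) * #(E ∩ ℓ) - #E) ^ 2 :=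
          sum_le_sum_of_subset_of_nonneg h𝓛 fun _ _ _ => sq_nonneg _
      _ = (Fintype.card F : ℤ) ^ 3 * #E - Fintype.card F * #E ^ 2 :=
          sum_sq_mul_card_inter_sub_card E
  rcases (#E).eq_zero_or_pos with hE₀ | hE₀
  · simp [hE₀]
  have : #E * (#E * #𝓛) ≤ #E * Fintype.card F ^ 3 := by
    zify
    nlinarith [Nat.cast_nonneg (α := ℤ) (Fintype.card F)]
  exact le_of_mul_le_mul_left this hE₀

end AffinePlane

theorem incidence_exists
    {F : Type*} [Field F] [Fintype F] [DecidableEq F] (q : ℕ) (hq : Fintype.card F = q)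
    (E : Finset (F × F)) (𝓛 : Finset (Finset (F × F))) (h𝓛 : ∀ ℓ ∈ 𝓛, IsLine ℓ)
    (h : E.card * 𝓛.card > q ^ 3) :
    ∃ p ∈ E, ∃ ℓ ∈ 𝓛, p ∈ ℓ := by
  subst hq
  by_contra hcon
  push Not at hcon
  refine not_le.2 h (card_mul_card_le_of_disjoint (fun ℓ hℓ => mem_lines.2 (h𝓛 ℓ hℓ)) ?_)
  exact fun ℓ hℓ => disjoint_left.2 fun p hp hpℓ => hcon p hp ℓ hℓ hpℓ
end

section
/- Let d ≥ 2, z ∈ 𝔽_q \ {0}, E ⊆ 𝔽_q^d, and Θ ⊆ 𝔽_q^{d−1} nonempty. Then there exists θ ∈ Θ such that |{v·(θ,z) : v ∈ E}| ≥ q·|E|·|Θ| / (q^d + |E|·|Θ|), where (θ,z) denotes the vector in 𝔽_q^d with first d−1 coordinates θ and last coordinate z. -/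
/-!
For a direction `θ` let `C θ` count the pairs `(v, w) ∈ E²` with `v·(θ,z) = w·(θ,z)`.
Cauchy–Schwarz over the fibres of `v ↦ v·(θ,z)` gives `|E|² ≤ |E·(θ,z)| · C θ`, and hence also
`|E|² ≤ q · C θ`. A pair `v ≠ w` collides for at most `q^(d-2)` of the `q^(d-1)` vectors `θ`,
because, as `z ≠ 0`, `(v - w)·(θ,z) = 0` is a nontrivial affine equation in `θ`.
So the nonnegative excesses `q · C θ - |E|²` sum, over all `θ`, to at most `|E| q^d`; the `θ ∈ Θ`
of least excess has excess at most `|E| q^d / |Θ|`, and the two Cauchy–Schwarz bounds turn this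
into the claimed lower bound.
-/

open Finset

section Collisions

variable {α β : Type*} [DecidableEq β]

def collisionCount (s : Finset α) (g : α → β) : ℕ := #{p ∈ s ×ˢ s | g p.1 = g p.2}

theorem collisionCount_eq_sum_sq (s : Finset α) (g : α → β) :
    collisionCount s g = ∑ b ∈ s.image g, #{a ∈ s | g a = b} ^ 2 := by
  rw [collisionCount, card_eq_sum_card_fiberwise (f := fun p => g p.1) (t := s.image g)]
  · refine sum_congr rfl fun b _ => ?_
    rw [sq, ← card_product, filter_filter]
    congr 1
    ext ⟨a, a'⟩
    simp only [mem_filter, mem_product]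
    grind
  · intro p hp
    simp only [coe_filter, mem_product, Set.mem_ofPred_eq] at hp
    exact mem_coe.2 (mem_image_of_mem g hp.1.1)

theorem sq_card_le_card_image_mul_collisionCount (s : Finset α) (g : α → β) :
    #s ^ 2 ≤ #(s.image g) * collisionCount s g := by
  rw [collisionCount_eq_sum_sq, card_eq_sum_card_image g s]
  exact sq_sum_le_card_mul_sum_sq

end Collisions

theorem exists_mem_card_nsmul_le_sum {ι M : Type*} [Fintype ι] [AddCommMonoid M] [LinearOrder M]
    [IsOrderedAddMonoid M] {s : Finset ι} (hs : s.Nonempty) {f : ι → M} (hf : 0 ≤ f) :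
    ∃ i ∈ s, #s • f i ≤ ∑ j, f j := by
  obtain ⟨i, hi, hmin⟩ := s.exists_min_image f hs
  exact ⟨i, hi, (card_nsmul_le_sum s f (f i) hmin).trans
    (sum_le_univ_sum_of_nonneg hf)⟩

theorem AddMonoidHom.card_fiber_mul_card_of_surjective {G M : Type*} [AddGroup G] [Fintype G]
    [AddMonoid M] [Fintype M] [DecidableEq M] (f : G →+ M) (hf : Function.Surjective f) (m : M) :
    #{g | f g = m} * Fintype.card M = Fintype.card G := by
  calc #{g | f g = m} * Fintype.card M = ∑ m' : M, #{g | f g = m'} := by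
        rw [sum_congr rfl fun m' _ => card_fiber_eq_of_mem_range f (hf m') (hf m), sum_const,
          card_univ, smul_eq_mul, mul_comm]
    _ = Fintype.card G := (card_eq_sum_card_fiberwise fun _ _ => mem_coe.2 (mem_univ _)).symm

theorem dotProduct_snoc {R : Type*} [NonUnitalNonAssocSemiring R] {n : ℕ} (u : Fin (n + 1) → R)
    (θ : Fin n → R) (z : R) : u ⬝ᵥ Fin.snoc θ z = Fin.init u ⬝ᵥ θ + u (Fin.last n) * z := by
  simp [dotProduct, Fin.sum_univ_castSucc, Fin.init]

section FiniteField

variable {F : Type*} [Field F] [Fintype F] [DecidableEq F]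

theorem card_filter_dotProduct_eq_mul_card {n : ℕ} {c : Fin n → F} (hc : c ≠ 0) (b : F) :
    #{θ | c ⬝ᵥ θ = b} * Fintype.card F = Fintype.card F ^ n := by
  obtain ⟨i, hi⟩ := Function.ne_iff.1 hc
  have hsurj : Function.Surjective (AddMonoidHom.mk' (c ⬝ᵥ ·) (dotProduct_add c)) := fun b =>
    ⟨Pi.single i (b / c i), by simp [dotProduct_single, mul_div_cancel₀ _ hi]⟩
  simpa using AddMonoidHom.card_fiber_mul_card_of_surjective _ hsurj b

theorem card_filter_dotProduct_snoc_eq_zero_mul_card_le {n : ℕ} {u : Fin (n + 1) → F}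
    (hu : u ≠ 0) {z : F} (hz : z ≠ 0) :
    #{θ : Fin n → F | u ⬝ᵥ Fin.snoc θ z = 0} * Fintype.card F ≤ Fintype.card F ^ n := by
  simp_rw [dotProduct_snoc, add_eq_zero_iff_eq_neg]
  by_cases hc : Fin.init u = 0
  · have hlast : u (Fin.last n) ≠ 0 := fun h => hu <| by
      rw [← Fin.snoc_init_self u, hc, h]
      ext i
      cases i using Fin.lastCases <;> simp
    simp [hc, hlast, hz]
  · exact (card_filter_dotProduct_eq_mul_card hc _).le

theorem card_mul_sum_collisionCount_dotProduct_snoc_le {n : ℕ} {z : F} (hz : z ≠ 0)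
    (E : Finset (Fin (n + 1) → F)) :
    Fintype.card F * ∑ θ : Fin n → F, collisionCount E (· ⬝ᵥ Fin.snoc θ z)
      ≤ #E * Fintype.card F ^ (n + 1) + #E ^ 2 * Fintype.card F ^ n := by
  set q := Fintype.card F
  have hpair : ∀ p ∈ E ×ˢ E,
      #{θ : Fin n → F | p.1 ⬝ᵥ Fin.snoc θ z = p.2 ⬝ᵥ Fin.snoc θ z} * q
        ≤ (if p.1 = p.2 then q ^ (n + 1) else 0) + q ^ n := by
    rintro ⟨v, w⟩ -
    by_cases hvw : v = w
    · simp [hvw, q, pow_succ]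
    · simp_rw [if_neg hvw, zero_add, ← sub_eq_zero (a := v ⬝ᵥ _), ← sub_dotProduct]
      exact card_filter_dotProduct_snoc_eq_zero_mul_card_le (sub_ne_zero.2 hvw) hz
  calc q * ∑ θ : Fin n → F, collisionCount E (· ⬝ᵥ Fin.snoc θ z)
      = ∑ p ∈ E ×ˢ E, #{θ : Fin n → F | p.1 ⬝ᵥ Fin.snoc θ z = p.2 ⬝ᵥ Fin.snoc θ z} * q := by
        rw [mul_comm, ← sum_mul]
        exact congrArg (· * q) (sum_card_bipartiteAbove_eq_sum_card_bipartiteBelow _)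
    _ ≤ ∑ p ∈ E ×ˢ E, ((if p.1 = p.2 then q ^ (n + 1) else 0) + q ^ n) := sum_le_sum hpair
    _ = #E * q ^ (n + 1) + #E ^ 2 * q ^ n := by
        rw [sum_add_distrib, ← sum_filter, sum_const, sum_const, ← diag_eq_filter, diag_card,
          card_product, smul_eq_mul, smul_eq_mul, sq]

theorem exists_mem_card_mul_excess_collisionCount_le {n : ℕ} {Θ : Finset (Fin n → F)}
    (hΘ : Θ.Nonempty) {z : F} (hz : z ≠ 0) (E : Finset (Fin (n + 1) → F)) :
    ∃ θ ∈ Θ, (#Θ : ℝ) * (Fintype.card F * collisionCount E (· ⬝ᵥ Fin.snoc θ z) - #E ^ 2)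
      ≤ #E * (Fintype.card F : ℝ) ^ (n + 1) := by
  set excess : (Fin n → F) → ℝ := fun θ =>
    Fintype.card F * collisionCount E (· ⬝ᵥ Fin.snoc θ z) - #E ^ 2
  have hexcess : 0 ≤ excess := fun θ => by
    have h : #E ^ 2 ≤ Fintype.card F * collisionCount E (· ⬝ᵥ Fin.snoc θ z) :=
      (sq_card_le_card_image_mul_collisionCount E _).trans
        (Nat.mul_le_mul_right _ (card_le_univ _))
    simp only [Pi.zero_apply, excess, sub_nonneg]
    exact_mod_cast h
  obtain ⟨θ, hθ, hle⟩ := exists_mem_card_nsmul_le_sum hΘ hexcess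
  refine ⟨θ, hθ, (nsmul_eq_mul (#Θ) (excess θ) ▸ hle).trans ?_⟩
  have hsum : (Fintype.card F : ℝ) * ∑ θ : Fin n → F, (collisionCount E (· ⬝ᵥ Fin.snoc θ z) : ℝ)
      ≤ #E * (Fintype.card F : ℝ) ^ (n + 1) + #E ^ 2 * (Fintype.card F : ℝ) ^ n := by
    exact_mod_cast card_mul_sum_collisionCount_dotProduct_snoc_le hz E
  simp only [excess, sum_sub_distrib, ← mul_sum, sum_const, card_univ, Fintype.card_fun,
    Fintype.card_fin, nsmul_eq_mul]
  push_cast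
  linarith

end FiniteField

/-- Here `d = n + 1` and `(θ, z)` is `Fin.snoc θ z`. -/
theorem good_direction_higher_dim_general
    {F : Type*} [Field F] [Fintype F] [DecidableEq F] (q : ℕ) (hq : Fintype.card F = q)
    (n : ℕ) (z : F) (hz : z ≠ 0)
    (E : Finset (Fin (n + 1) → F)) (Θ : Finset (Fin n → F)) (hΘ : Θ.Nonempty) :
    ∃ θ ∈ Θ, ((E.image (fun v : Fin (n + 1) → F => ∑ i, v i * (Fin.snoc θ z : Fin (n + 1) → F) i)).card : ℝ)
      ≥ (q : ℝ) * E.card * Θ.card / ((q : ℝ) ^ (n + 1) + E.card * Θ.card) := by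
  subst hq
  obtain ⟨θ, hθΘ, hexcess⟩ := exists_mem_card_mul_excess_collisionCount_le hΘ hz E
  refine ⟨θ, hθΘ, ?_⟩
  have hCS : (#E : ℝ) ^ 2
      ≤ #(E.image (· ⬝ᵥ Fin.snoc θ z)) * collisionCount E (· ⬝ᵥ Fin.snoc θ z) := by
    exact_mod_cast sq_card_le_card_image_mul_collisionCount E _
  change (#(E.image (· ⬝ᵥ Fin.snoc θ z)) : ℝ) ≥ _
  rw [ge_iff_le, div_le_iff₀ (by positivity)]
  rcases E.eq_empty_or_nonempty with rfl | hE
  · simp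
  have hEpos : (0 : ℝ) < #E := by exact_mod_cast hE.card_pos
  refine le_of_mul_le_mul_left ?_ hEpos
  nlinarith [mul_le_mul_of_nonneg_left hCS (by positivity : (0 : ℝ) ≤ Fintype.card F * #Θ),
    mul_le_mul_of_nonneg_left hexcess (by positivity : (0 : ℝ) ≤ #(E.image (· ⬝ᵥ Fin.snoc θ z)))]

/-- Good direction in higher dimensions: here the dimension is `d = n + 1` with `n ≥ 1`,
so that `d ≥ 2`, and `(θ, z) = Fin.snoc θ z` is the vector with first `d - 1`
coordinates `θ` and last coordinate `z`. -/
theorem good_direction_higher_dim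
    {F : Type*} [Field F] [Fintype F] [DecidableEq F] (q : ℕ) (hq : Fintype.card F = q)
    (n : ℕ) (hn : 1 ≤ n) (z : F) (hz : z ≠ 0)
    (E : Finset (Fin (n + 1) → F)) (Θ : Finset (Fin n → F)) (hΘ : Θ.Nonempty) :
    ∃ θ ∈ Θ, ((E.image (fun v : Fin (n + 1) → F => ∑ i, v i * (Fin.snoc θ z : Fin (n + 1) → F) i)).card : ℝ)
      ≥ (q : ℝ) * E.card * Θ.card / ((q : ℝ) ^ (n + 1) + E.card * Θ.card) :=
  good_direction_higher_dim_general q hq n z hz E Θ hΘ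
end

section
/- Let d ≥ 2, z ∈ 𝔽_q \ {0}, and A ⊆ 𝔽_q with |A| > q^{d/(2d−1)}. Then there exist a₁, …, a_{d−1} ∈ A such that |a₁A + a₂A + ⋯ + a_{d−1}A + zA| > q/2. -/
/-!
Write `d = n + 1`, `D = A^d`, and for a pin `a ∈ F^n` let `E(a)` count the pairs in `D × D`
on which `b ↦ a₁b₁ + ⋯ + aₙbₙ + z b_d` agrees. Cauchy–Schwarz over the fibres gives
`|D|² ≤ |image| · E(a)`, in particular `|D|² ≤ q E(a)`. Since `z ≠ 0`, two distinct points of `D`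
agree for at most `q^(n-1)` pins `a ∈ F^n` (a nontrivial affine equation in `a`), so
`q ∑ₐ E(a) ≤ q^d |D| + q^n |D|²`. The excesses `q E(a) - |D|² ≥ 0` therefore sum to at most
`q^d |D|` over all of `F^n`, a fortiori over `A^n`, and the best pin `a ∈ A^n` has
`|A|^n (q E(a) - |D|²) ≤ q^d |D|`. The hypothesis `q^d < |A|^(2d-1) = |A|^n |D|` turns this into
`q E(a) < 2 |D|²`, hence `|image| > q / 2`.
-/

open Finset

namespace Finset

variable {α β : Type*} [DecidableEq β]

def collisions (s : Finset α) (f : α → β) : Finset (α × α) :=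
  {p ∈ s ×ˢ s | f p.1 = f p.2}

theorem card_collisions_eq_sum_sq (s : Finset α) (f : α → β) :
    #(collisions s f) = ∑ t ∈ s.image f, #{a ∈ s | f a = t} ^ 2 := by
  rw [card_eq_sum_card_fiberwise (s := collisions s f) (f := fun p => f p.1) (t := s.image f)
    fun p hp => mem_image_of_mem f (mem_product.1 (mem_filter.1 hp).1).1]
  refine sum_congr rfl fun t _ => ?_
  rw [sq, ← card_product]
  congr 1
  ext ⟨a, b⟩
  simp only [collisions, mem_filter, mem_product]
  grind

theorem sq_card_le_card_image_mul_card_collisions (s : Finset α) (f : α → β) :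
    #s ^ 2 ≤ #(s.image f) * #(collisions s f) := by
  calc #s ^ 2 = (∑ t ∈ s.image f, #{a ∈ s | f a = t}) ^ 2 := by
        rw [← card_eq_sum_card_image]
    _ ≤ #(s.image f) * ∑ t ∈ s.image f, #{a ∈ s | f a = t} ^ 2 := sq_sum_le_card_mul_sum_sq
    _ = #(s.image f) * #(collisions s f) := by rw [card_collisions_eq_sum_sq]

theorem sq_card_le_card_mul_card_collisions [Fintype β] (s : Finset α) (f : α → β) :
    #s ^ 2 ≤ Fintype.card β * #(collisions s f) :=
  (sq_card_le_card_image_mul_card_collisions s f).trans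
    (Nat.mul_le_mul_right _ (card_le_univ _))

theorem lt_two_mul_card_image_of_mul_card_collisions_lt {s : Finset α} {f : α → β} {k : ℕ}
    (h : k * #(collisions s f) < 2 * #s ^ 2) : k < 2 * #(s.image f) := by
  refine Nat.lt_of_mul_lt_mul_right (a := #(collisions s f)) ?_
  calc k * #(collisions s f) < 2 * #s ^ 2 := h
    _ ≤ 2 * (#(s.image f) * #(collisions s f)) := by
        gcongr; exact sq_card_le_card_image_mul_card_collisions s f
    _ = 2 * #(s.image f) * #(collisions s f) := by ring

theorem exists_mem_card_mul_le_of_sum_le {ι : Type*} [Fintype ι] (f : ι → ℕ) {m X : ℕ}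
    (hfloor : ∀ i, m ≤ f i) (hsum : ∑ i, f i ≤ Fintype.card ι * m + X) {S : Finset ι}
    (hS : S.Nonempty) : ∃ a ∈ S, #S * f a ≤ #S * m + X := by
  classical
  obtain ⟨a, ha, hmin⟩ := S.exists_min_image f hS
  refine ⟨a, ha, ?_⟩
  have hcompl : #Sᶜ * m ≤ ∑ i ∈ Sᶜ, f i := card_nsmul_le_sum _ _ _ fun i _ => hfloor i
  have hS_le : #S * f a ≤ ∑ i ∈ S, f i := card_nsmul_le_sum _ _ _ hmin
  rw [← card_add_card_compl S, add_mul, ← sum_add_sum_compl S f] at hsum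
  linarith

end Finset

theorem pow_lt_pow_of_rpow_div_lt {x y : ℝ} (hx : 0 ≤ x) {k m : ℕ} (hm : m ≠ 0)
    (h : x ^ ((k : ℝ) / m) < y) : x ^ k < y ^ m := by
  have := pow_lt_pow_left₀ h (Real.rpow_nonneg hx _) hm
  rwa [← Real.rpow_natCast, ← Real.rpow_mul hx, div_mul_cancel₀ _ (by exact_mod_cast hm),
    Real.rpow_natCast] at this

section DotProduct

variable {ι F : Type*} [Fintype ι] [DecidableEq ι] [Field F] [Fintype F] [DecidableEq F]

theorem card_mul_card_filter_dotProduct_eq {u : ι → F} (hu : u ≠ 0) (c : F) :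
    Fintype.card F * #{v | v ⬝ᵥ u = c} = Fintype.card F ^ Fintype.card ι := by
  let φ : (ι → F) →+ F := AddMonoidHom.mk' (· ⬝ᵥ u) fun v w => add_dotProduct v w u
  have hφ : Function.Surjective φ := by
    obtain ⟨i, hi⟩ := Function.ne_iff.1 hu
    intro x
    refine ⟨Pi.single i (x / u i), ?_⟩
    simp [φ, single_dotProduct, div_mul_cancel₀ x hi]
  calc Fintype.card F * #{v | φ v = c} = ∑ x : F, #{v | φ v = x} := by
        rw [sum_congr rfl fun x _ =>
          AddMonoidHom.card_fiber_eq_of_mem_range φ (hφ x) (hφ c), sum_const, card_univ,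
          smul_eq_mul]
    _ = Fintype.card F ^ Fintype.card ι := by
        rw [← card_eq_sum_card_fiberwise fun v _ => mem_univ (φ v), card_univ,
          Fintype.card_fun]

end DotProduct

section Pinned

variable {F : Type*} [Field F] {n : ℕ}

def pinnedSum (z : F) (a : Fin n → F) (b : Fin (n + 1) → F) : F :=
  a ⬝ᵥ Fin.init b + z * b (Fin.last n)

theorem pinnedSum_eq_pinnedSum_iff (z : F) (a : Fin n → F) (b b' : Fin (n + 1) → F) :
    pinnedSum z a b = pinnedSum z a b' ↔
      a ⬝ᵥ (Fin.init b - Fin.init b') = z * (b' (Fin.last n) - b (Fin.last n)) := by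
  rw [dotProduct_sub, pinnedSum, pinnedSum]
  constructor <;> intro h <;> linear_combination h

variable [Fintype F] [DecidableEq F]

theorem card_mul_card_filter_pinnedSum_eq_le {z : F} (hz : z ≠ 0) {b b' : Fin (n + 1) → F}
    (hb : b ≠ b') :
    Fintype.card F * #{a | pinnedSum z a b = pinnedSum z a b'} ≤ Fintype.card F ^ n := by
  simp_rw [pinnedSum_eq_pinnedSum_iff]
  by_cases hinit : Fin.init b - Fin.init b' = 0
  · have hlast : b' (Fin.last n) - b (Fin.last n) ≠ 0 := by
      refine sub_ne_zero.2 fun hlast => hb ?_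
      rw [← Fin.snoc_init_self b, ← Fin.snoc_init_self b', sub_eq_zero.1 hinit, hlast]
    simp [hinit, hz, hlast]
  · exact (card_mul_card_filter_dotProduct_eq hinit _).trans_le (by simp)

theorem card_mul_sum_card_collisions_pinnedSum_le {z : F} (hz : z ≠ 0)
    (D : Finset (Fin (n + 1) → F)) :
    Fintype.card F * ∑ a : Fin n → F, #(collisions D (pinnedSum z a))
      ≤ Fintype.card F ^ (n + 1) * #D + Fintype.card F ^ n * #D ^ 2 := by
  set q := Fintype.card F
  have hcount (p : (Fin (n + 1) → F) × (Fin (n + 1) → F)) :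
      q * #{a | pinnedSum z a p.1 = pinnedSum z a p.2}
        ≤ (if p.1 = p.2 then q ^ (n + 1) else 0) + q ^ n := by
    split_ifs with hp
    · calc q * #{a | pinnedSum z a p.1 = pinnedSum z a p.2} ≤ q * q ^ n := by
            gcongr; exact (card_filter_le _ _).trans (by simp [q])
        _ ≤ q ^ (n + 1) + q ^ n := by rw [pow_succ']; omega
    · simpa using card_mul_card_filter_pinnedSum_eq_le hz hp
  calc q * ∑ a : Fin n → F, #(collisions D (pinnedSum z a))
      = ∑ p ∈ D ×ˢ D, q * #{a | pinnedSum z a p.1 = pinnedSum z a p.2} := by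
        simp_rw [collisions, card_filter, ← mul_sum]
        rw [sum_comm]
    _ ≤ ∑ p ∈ D ×ˢ D, ((if p.1 = p.2 then q ^ (n + 1) else 0) + q ^ n) :=
        sum_le_sum fun p _ => hcount p
    _ = q ^ (n + 1) * #D + q ^ n * #D ^ 2 := by
        rw [sum_add_distrib, ← sum_filter, sum_const, sum_const, ← diag_eq_filter, diag_card,
          card_product, smul_eq_mul, smul_eq_mul]
        ring

theorem exists_mem_card_mul_card_collisions_pinnedSum_le {z : F} (hz : z ≠ 0)
    (D : Finset (Fin (n + 1) → F)) {S : Finset (Fin n → F)} (hS : S.Nonempty) :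
    ∃ a ∈ S, #S * (Fintype.card F * #(collisions D (pinnedSum z a)))
      ≤ #S * #D ^ 2 + Fintype.card F ^ (n + 1) * #D := by
  refine exists_mem_card_mul_le_of_sum_le _
    (fun a => sq_card_le_card_mul_card_collisions D (pinnedSum z a)) ?_ hS
  rw [← mul_sum, Fintype.card_fun, Fintype.card_fin]
  linarith [card_mul_sum_card_collisions_pinnedSum_le hz D]

end Pinned

theorem pinned_sums_higher_dim_general
    {F : Type*} [Field F] [Fintype F] [DecidableEq F] (q : ℕ) (hq : Fintype.card F = q)
    (n : ℕ) (z : F) (hz : z ≠ 0) (A : Finset F)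
    (h : (A.card : ℝ) > (q : ℝ) ^ (((n : ℝ) + 1) / (2 * (n : ℝ) + 1))) :
    ∃ a : Fin n → F, (∀ i, a i ∈ A) ∧
      (((Fintype.piFinset fun _ : Fin (n + 1) => A).image
          (fun b : Fin (n + 1) → F =>
            (∑ i : Fin n, a i * b i.castSucc) + z * b (Fin.last n))).card : ℝ)
        > (q : ℝ) / 2 := by
  subst hq
  set q := Fintype.card F
  set D := Fintype.piFinset fun _ : Fin (n + 1) => A
  have hD : #D = #A ^ (n + 1) := Fintype.card_piFinset_const A (n + 1)
  have hsize : q ^ (n + 1) < #A ^ n * #D := by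
    have := pow_lt_pow_of_rpow_div_lt (Nat.cast_nonneg q) (k := n + 1) (m := 2 * n + 1)
      (by omega) (by push_cast; exact h)
    rw [hD, ← pow_add, show n + (n + 1) = 2 * n + 1 by ring]
    exact_mod_cast this
  have hA : A.Nonempty := card_pos.1 <| Nat.pos_of_ne_zero fun h0 => by simp [hD, h0] at hsize
  have hD_pos : 0 < #D := hD ▸ pow_pos hA.card_pos _
  obtain ⟨a, ha, hEa⟩ := exists_mem_card_mul_card_collisions_pinnedSum_le hz D
    (Fintype.piFinset_nonempty.2 fun _ => hA)
  rw [Fintype.card_piFinset_const] at hEa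
  refine ⟨a, Fintype.mem_piFinset.1 ha, ?_⟩
  change (#(D.image (pinnedSum z a)) : ℝ) > q / 2
  have hqE : q * #(collisions D (pinnedSum z a)) < 2 * #D ^ 2 := by
    refine Nat.lt_of_mul_lt_mul_left (a := #A ^ n) ?_
    calc #A ^ n * (q * #(collisions D (pinnedSum z a))) ≤ #A ^ n * #D ^ 2 + q ^ (n + 1) * #D :=
          hEa
      _ < #A ^ n * #D ^ 2 + #A ^ n * #D * #D := by gcongr
      _ = #A ^ n * (2 * #D ^ 2) := by ring
  rw [gt_iff_lt, div_lt_iff₀ two_pos, mul_comm]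
  exact_mod_cast lt_two_mul_card_image_of_mul_card_collisions_lt hqE

/-- Higher-dimensional pinned sums: the dimension is `d = n + 1` with `n ≥ 1`, so `d ≥ 2`
and `d / (2d - 1) = (n + 1) / (2n + 1)`.  The set `a₁A + ⋯ + a_{d-1}A + zA` is the image
of `A^d` under `b ↦ ∑ i, aᵢ bᵢ + z b_d`. -/
theorem pinned_sums_higher_dim
    {F : Type*} [Field F] [Fintype F] [DecidableEq F] (q : ℕ) (hq : Fintype.card F = q)
    (n : ℕ) (hn : 1 ≤ n) (z : F) (hz : z ≠ 0) (A : Finset F)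
    (h : (A.card : ℝ) > (q : ℝ) ^ (((n : ℝ) + 1) / (2 * (n : ℝ) + 1))) :
    ∃ a : Fin n → F, (∀ i, a i ∈ A) ∧
      (((Fintype.piFinset fun _ : Fin (n + 1) => A).image
          (fun b : Fin (n + 1) → F =>
            (∑ i : Fin n, a i * b i.castSucc) + z * b (Fin.last n))).card : ℝ)
        > (q : ℝ) / 2 :=
  pinned_sums_higher_dim_general q hq n z hz A h
end
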